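/- arXiv:2412.12657 — 2 statements merged into one kernel-verified Lean document; each statement's English description precedes it below -/
import Mathlib

section
/- Let G(x,y) = ln(1/|x-y|) + ln(max(|x|,1)) + ln(max(|y|,1)) and for a Möbius transformation ψ of the Riemann sphere define φ(x) = ln(|ψ'(x)|² · max(|ψ(x)|,1)^{-4} / max(|x|,1)^{-4}). Then for all distinct x, y (in the domain where everything is defined), G(ψ(x), ψ(y)) = G(x,y) - (1/4)(φ(x) + φ(y)). -/
/-! Every term of `G(ψ x, ψ y) - G(x, y) + (φ x + φ y)/4` is a logarithm of a norm, and the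
identity `ψ x - ψ y = (ad - bc)(x - y) / ((cx + d)(cy + d))` together with
`ψ' z = (ad - bc) / (cz + d)²` splits these into `log ‖ad - bc‖`, `log ‖x - y‖` and
`log ‖cz + d‖`, `log |z|₊`, `log |ψ z|₊`, all of which cancel. -/

/-- The Green function of the Laplacian on the Riemann sphere with metric
`|z|₊^{-4}|dz|²`: `G(x,y) = ln(1/|x-y|) + ln(max(|x|,1)) + ln(max(|y|,1))`. -/
noncomputable def sphereGreen (x y : ℂ) : ℝ :=
  Real.log (1 / ‖x - y‖) + Real.log (max (‖x‖) 1)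
    + Real.log (max (‖y‖) 1)

open Real

lemma mobius_sub_mobius {K : Type*} [Field K] (a b c d z w : K)
    (hz : c * z + d ≠ 0) (hw : c * w + d ≠ 0) :
    (a * z + b) / (c * z + d) - (a * w + b) / (c * w + d)
      = (a * d - b * c) * (z - w) / ((c * z + d) * (c * w + d)) := by
  rw [div_sub_div _ _ hz hw]
  ring

lemma log_norm_mobius_sub (a b c d z w : ℂ) (habcd : a * d - b * c ≠ 0)
    (hz : c * z + d ≠ 0) (hw : c * w + d ≠ 0) (hzw : z ≠ w) :
    log ‖(a * z + b) / (c * z + d) - (a * w + b) / (c * w + d)‖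
      = log ‖a * d - b * c‖ + log ‖z - w‖ - log ‖c * z + d‖ - log ‖c * w + d‖ := by
  have hzw' : z - w ≠ 0 := sub_ne_zero.mpr hzw
  rw [mobius_sub_mobius a b c d z w hz hw, norm_div, norm_mul, norm_mul,
    log_div (by positivity) (by positivity), log_mul (by positivity) (by positivity),
    log_mul (by positivity) (by positivity)]
  ring

lemma log_norm_mobius_deriv (a b c d z : ℂ) (habcd : a * d - b * c ≠ 0)
    (hz : c * z + d ≠ 0) :
    log ‖(a * d - b * c) / (c * z + d) ^ 2‖
      = log ‖a * d - b * c‖ - 2 * log ‖c * z + d‖ := by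
  rw [norm_div, norm_pow, log_div (by positivity) (by positivity), log_pow]
  norm_num

lemma log_sq_mul_zpow_div_zpow {s u v : ℝ} (hs : s ≠ 0) (hu : u ≠ 0) (hv : v ≠ 0) :
    log (s ^ 2 * u ^ (-4 : ℤ) / v ^ (-4 : ℤ)) = 2 * log s - 4 * log u + 4 * log v := by
  rw [log_div (by positivity) (by positivity), log_mul (by positivity) (by positivity),
    log_pow, log_zpow, log_zpow]
  push_cast
  ring

lemma sphereGreen_eq (x y : ℂ) :
    sphereGreen x y = -log ‖x - y‖ + log (max ‖x‖ 1) + log (max ‖y‖ 1) := by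
  rw [sphereGreen, one_div, log_inv]

/-- Transformation of the sphere Green function under a Möbius map
`ψ(z) = (az+b)/(cz+d)` (with `ad - bc ≠ 0`, derivative `ψ'(z) = (ad-bc)/(cz+d)²`):
`G(ψ(x), ψ(y)) = G(x,y) - (1/4)(φ(x) + φ(y))` where
`φ(x) = ln(|ψ'(x)|² · max(|ψ(x)|,1)^{-4} / max(|x|,1)^{-4})`. -/
theorem sphereGreen_mobius (a b c d : ℂ) (habcd : a * d - b * c ≠ 0)
    (x y : ℂ) (hx : c * x + d ≠ 0) (hy : c * y + d ≠ 0) (hxy : x ≠ y) :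
    let ψ : ℂ → ℂ := fun z => (a * z + b) / (c * z + d)
    let ψ' : ℂ → ℂ := fun z => (a * d - b * c) / (c * z + d) ^ 2
    let φ : ℂ → ℝ := fun z =>
      Real.log ((‖ψ' z‖) ^ 2 * (max (‖ψ z‖) 1) ^ (-4 : ℤ)
        / (max (‖z‖) 1) ^ (-4 : ℤ))
    sphereGreen (ψ x) (ψ y) = sphereGreen x y - (1 / 4) * (φ x + φ y) := by
  intro ψ ψ' φ
  have hφ : ∀ z, c * z + d ≠ 0 → φ z = 2 * (log ‖a * d - b * c‖ - 2 * log ‖c * z + d‖)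
      - 4 * log (max ‖ψ z‖ 1) + 4 * log (max ‖z‖ 1) := fun z hz => by
    rw [← log_norm_mobius_deriv a b c d z habcd hz]
    exact log_sq_mul_zpow_div_zpow (norm_ne_zero_iff.mpr (div_ne_zero habcd (pow_ne_zero 2 hz)))
      (by positivity) (by positivity)
  rw [sphereGreen_eq, sphereGreen_eq, hφ x hx, hφ y hy,
    log_norm_mobius_sub a b c d x y habcd hx hy hxy]
  ring
end

section
/- Let A_n (n ∈ ℤ) be operators satisfying the Heisenberg commutation relations [⟨u,A_n⟩, ⟨v,A_m⟩] = ⟨u,v⟩(n/2)δ_{n,-m} on a space with a Hermitian inner product such that A_n* = A_{-n} for n ≠ 0 and A_0* = A_0 - iQ (componentwise in an orthonormal basis). Define the Virasoro modes L_n = -iQ(n+1)·A_n + Σ_{m∈ℤ} :⟨A_{n-m}, A_m⟩: where the normal ordering puts operators with negative index to the left. Then [L_n, L_m] = (n-m)L_{n+m} + (c/12)(n³-n)δ_{n,-m} with central charge c = r + 6⟨Q,Q⟩. -/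
open scoped BigOperators

/-- The Segal–Sugawara Virasoro modes built from a (rank `r`) Heisenberg family
`A : ℤ → Fin r → End(V)` with background charge `Q ∈ ℝ^r`:
`L_n = -iQ(n+1)·A_n + Σ_{m∈ℤ} :⟨A_{n-m}, A_m⟩:`, where the normally ordered product
puts the operator with negative index on the left. -/
noncomputable def ssVirasoro {V : Type*} [AddCommGroup V] [Module ℂ V] {r : ℕ}
    (Q : Fin r → ℝ) (A : ℤ → Fin r → V →ₗ[ℂ] V) (n : ℤ) (v : V) : V :=
  (-Complex.I * ((n : ℂ) + 1)) • (∑ j, (Q j : ℂ) • A n j v)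
    + ∑ᶠ m : ℤ, if n - m < 0 then ∑ j, A (n - m) j (A m j v)
        else ∑ j, A m j (A (n - m) j v)


/-!
On a vector `v` killed by every `A_k` with `k ≥ N`, only finitely many normally ordered terms
of `L_n v` are nonzero, so on `v` the mode `L_n` agrees with the operator
`chargeTerm + ∑_{k ∈ s} :A_{n-k} A_k:` for every large enough interval `s`. Hence
`L_n L_m v - L_m L_n v` is the value at `v` of a genuine commutator in `End V`.

That commutator is computed from the Heisenberg relations alone. Normal ordering changes
`A_{n-k} A_k` only by a scalar, which is central; summing `[A_{n-k} A_k, A_{m-l} A_l]` over `l`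
leaves four terms, which recombine into `(n - m) L_{n+m}` once they are normally ordered again.
The scalars produced by this reordering add up to `r (n³ - n) / 12`, and the charge terms
contribute the remaining `⟨Q, Q⟩ (n³ - n) / 2` of the central term.
-/

open Finset

/- `Module.End ℂ V` has no global `LieRing` instance, so the Lie algebra API does not apply to
the ring commutator `⁅x, y⁆ = x * y - y * x`; these are the identities it satisfies. -/
namespace Ring

variable {R : Type*} [Ring R]

lemma mul_lie (x y z : R) : ⁅x * y, z⁆ = x * ⁅y, z⁆ + ⁅x, z⁆ * y := by
  simp only [lie_def]; noncomm_ring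

lemma lie_mul (x y z : R) : ⁅x, y * z⁆ = y * ⁅x, z⁆ + ⁅x, y⁆ * z := by
  simp only [lie_def]; noncomm_ring

lemma lie_sum {ι : Type*} (s : Finset ι) (x : R) (f : ι → R) :
    ⁅x, ∑ i ∈ s, f i⁆ = ∑ i ∈ s, ⁅x, f i⁆ := by
  simp only [lie_def, mul_sum, sum_mul, sum_sub_distrib]

lemma sum_lie {ι : Type*} (s : Finset ι) (f : ι → R) (x : R) :
    ⁅∑ i ∈ s, f i, x⁆ = ∑ i ∈ s, ⁅f i, x⁆ := by
  simp only [lie_def, mul_sum, sum_mul, sum_sub_distrib]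

lemma lie_swap (x y : R) : ⁅x, y⁆ = -⁅y, x⁆ := by
  simp only [lie_def, neg_sub]

lemma smul_lie {S : Type*} [CommSemiring S] [Algebra S R] (c : S) (x y : R) :
    ⁅c • x, y⁆ = c • ⁅x, y⁆ := by
  simp only [lie_def, smul_mul_assoc, mul_smul_comm, smul_sub]

lemma lie_smul {S : Type*} [CommSemiring S] [Algebra S R] (c : S) (x y : R) :
    ⁅x, c • y⁆ = c • ⁅x, y⁆ := by
  simp only [lie_def, smul_mul_assoc, mul_smul_comm, smul_sub]

lemma lie_add_smul_one {S : Type*} [CommSemiring S] [Algebra S R] (c : S) (x y : R) :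
    ⁅x, y + c • (1 : R)⁆ = ⁅x, y⁆ := by
  simp only [lie_def, mul_add, add_mul, mul_smul_comm, smul_mul_assoc, mul_one, one_mul]; abel

lemma add_smul_one_lie {S : Type*} [CommSemiring S] [Algebra S R] (c : S) (x y : R) :
    ⁅x + c • (1 : R), y⁆ = ⁅x, y⁆ := by
  simp only [lie_def, mul_add, add_mul, mul_smul_comm, smul_mul_assoc, mul_one, one_mul]; abel

end Ring

lemma Finset.sum_comp_add_left_of_support_subset {M : Type*} [AddCommMonoid M] {f : ℤ → M}
    {c : ℤ} {s t : Finset ℤ} (hs : Function.support f ⊆ s)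
    (ht : Function.support (fun k => f (c + k)) ⊆ t) :
    ∑ k ∈ t, f (c + k) = ∑ p ∈ s, f p := by
  rw [← finsum_eq_sum_of_support_subset _ ht, ← finsum_eq_sum_of_support_subset _ hs]
  exact finsum_comp_equiv (Equiv.addLeft c)

namespace SegalSugawara

variable {V : Type*} [AddCommGroup V] [Module ℂ V] {r : ℕ}

def IsHeisenberg (A : ℤ → Fin r → Module.End ℂ V) : Prop :=
  ∀ n m i j, ⁅A n i, A m j⁆ = (if n = -m ∧ i = j then (n / 2 : ℂ) else 0) • 1

variable (A : ℤ → Fin r → Module.End ℂ V)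

/- `pairProd A p q` is `⟨A_p, A_q⟩ = ∑ⱼ A_p^j A_q^j`, `normalPair A n k` is
`:⟨A_{n-k}, A_k⟩:` and `chargeTerm A Q n` is the term `-iQ(n+1)·A_n` of `L_n`. -/
def pairProd (p q : ℤ) : Module.End ℂ V := ∑ j, A p j * A q j

def normalPair (n k : ℤ) : Module.End ℂ V :=
  if n - k < 0 then pairProd A (n - k) k else pairProd A k (n - k)

def chargeTerm (Q : Fin r → ℝ) (n : ℤ) : Module.End ℂ V :=
  (-Complex.I * ((n : ℂ) + 1)) • ∑ j, (Q j : ℂ) • A n j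

def truncatedVirasoro (Q : Fin r → ℝ) (s : Finset ℤ) (n : ℤ) : Module.End ℂ V :=
  chargeTerm A Q n + ∑ k ∈ s, normalPair A n k

def annihilatedFrom (N : ℤ) : Submodule ℂ V :=
  ⨅ (k : ℤ) (_ : N ≤ k) (j : Fin r), LinearMap.ker (A k j)

variable {A}

lemma isHeisenberg_of_apply (h : ∀ (n m : ℤ) (i j : Fin r) (v : V),
      A n i (A m j v) - A m j (A n i v) = if n = -m ∧ i = j then ((n : ℂ) / 2) • v else 0) :
    IsHeisenberg A :=
  fun n m i j => LinearMap.ext fun v => by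
    simp only [Ring.lie_def, LinearMap.sub_apply, Module.End.mul_apply, h]
    split_ifs <;> simp

/- `r / 2` times `anomaly n k` is the scalar left over when the `k`-th term of
`⁅∑ₖ :A_{n-k} A_k:, ∑ₗ :A_{-n-l} A_l:⁆` is normally ordered again. -/
def anomaly (n k : ℤ) : ℤ :=
  k * (n - k) * ((if k ≤ n then 1 else 0) - (if k ≤ 0 then 1 else 0))

lemma two_mul_sum_Ioc_id {p : ℤ} (hp : 0 ≤ p) : 2 * ∑ k ∈ Ioc 0 p, k = p * (p + 1) := by
  induction p, hp using Int.leInduction with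
  | base => simp
  | succ p hp ih =>
    rw [← insert_Ioc_right_eq_Ioc_add_one hp, sum_insert (by simp), mul_add, ih]
    ring

lemma six_mul_sum_Ioc_mul_sub {p : ℤ} (hp : 0 ≤ p) :
    6 * ∑ k ∈ Ioc 0 p, k * (p - k) = p ^ 3 - p := by
  induction p, hp using Int.leInduction with
  | base => simp
  | succ p hp ih =>
    have h : ∑ k ∈ Ioc 0 p, k * (p + 1 - k)
        = ∑ k ∈ Ioc 0 p, k * (p - k) + ∑ k ∈ Ioc 0 p, k := by
      rw [← sum_add_distrib]; exact sum_congr rfl fun k _ => by ring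
    rw [← insert_Ioc_right_eq_Ioc_add_one hp, sum_insert (by simp), h]
    linear_combination ih + 3 * two_mul_sum_Ioc_id hp

lemma six_mul_sum_anomaly {n K : ℤ} (hK : |n| ≤ K) :
    6 * ∑ k ∈ Icc (-K) K, anomaly n k = n ^ 3 - n := by
  obtain ⟨hK₁, hK₂⟩ := abs_le.mp hK
  rcases le_total 0 n with hn | hn
  · have h : ∀ k ∈ Icc (-K) K, anomaly n k = if k ∈ Ioc 0 n then k * (n - k) else 0 := by
      intro k _
      unfold anomaly
      simp only [mem_Ioc]
      split_ifs <;> omega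
    rw [sum_congr rfl h, sum_ite_mem, inter_eq_right.mpr (Ioc_subset_Icc_self.trans
      (Icc_subset_Icc (by omega) (by omega))), six_mul_sum_Ioc_mul_sub hn]
  · have h : ∀ k ∈ Icc (-K) K, anomaly n k = if k ∈ Ioc n 0 then -(k * (n - k)) else 0 := by
      intro k _
      unfold anomaly
      simp only [mem_Ioc]
      split_ifs <;> omega
    rw [sum_congr rfl h, sum_ite_mem, inter_eq_right.mpr (Ioc_subset_Icc_self.trans
      (Icc_subset_Icc (by omega) (by omega)))]
    have hIoc : Ioc n 0 = (Ioc 0 (-n)).map (addLeftEmbedding n) := by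
      rw [map_add_left_Ioc]; simp
    rw [hIoc, sum_map]
    have := six_mul_sum_Ioc_mul_sub (p := -n) (by omega)
    simp only [addLeftEmbedding_apply]
    rw [sum_congr rfl fun x _ => show -((n + x) * (n - (n + x))) = -(x * (-n - x)) by ring,
      sum_neg_distrib]
    linear_combination -this

lemma normalOrdering_constants_eq_anomaly (c : ℂ) (n m k : ℤ) :
    (k : ℂ) * (if 0 ≤ n - k ∧ n - k = -(m + k) then c * (n - k : ℤ) / 2 else 0)
      + ((n - k : ℤ) : ℂ)
        * (if 0 ≤ m + (n - k) ∧ m + (n - k) = -k then c * (m + (n - k) : ℤ) / 2 else 0)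
      = if n = -m then c * anomaly n k / 2 else 0 := by
  by_cases h : n = -m
  · subst h
    unfold anomaly
    split_ifs <;> first | omega | (push_cast; ring)
  · rw [if_neg (by omega), if_neg (by omega), if_neg h]
    ring

section Heisenberg

variable (hA : IsHeisenberg A)
include hA

lemma mode_lie_pairProd (t c d : ℤ) (j : Fin r) :
    ⁅A t j, pairProd A c d⁆
      = (if t = -d then (t / 2 : ℂ) • A c j else 0)
        + (if t = -c then (t / 2 : ℂ) • A d j else 0) := by
  simp only [pairProd, Ring.lie_sum, Ring.lie_mul, hA _ _ _ _, mul_smul_comm, smul_mul_assoc,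
    mul_one, one_mul, ite_smul, zero_smul, ite_and, mul_ite, ite_mul, mul_zero, zero_mul,
    sum_add_distrib]
  simp

lemma pairProd_lie_pairProd (a b c d : ℤ) :
    ⁅pairProd A a b, pairProd A c d⁆
      = (if b = -d then (b / 2 : ℂ) • pairProd A a c else 0)
      + (if b = -c then (b / 2 : ℂ) • pairProd A a d else 0)
      + (if a = -d then (a / 2 : ℂ) • pairProd A c b else 0)
      + (if a = -c then (a / 2 : ℂ) • pairProd A d b else 0) := by
  rw [pairProd, Ring.sum_lie]
  simp only [Ring.mul_lie, mode_lie_pairProd hA, mul_add, add_mul, mul_ite, ite_mul, mul_zero,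
    zero_mul, mul_smul_comm, smul_mul_assoc, sum_add_distrib, sum_ite_irrel, ← smul_sum,
    sum_const_zero]
  simp only [pairProd, add_assoc]

lemma pairProd_swap (p q : ℤ) :
    pairProd A p q = pairProd A q p + (if p = -q then (r * p / 2 : ℂ) else 0) • 1 := by
  rw [← sub_eq_iff_eq_add']
  have : pairProd A p q - pairProd A q p = ∑ i, ⁅A p i, A q i⁆ := by
    simp only [pairProd, Ring.lie_def, sum_sub_distrib]
  rw [this]
  simp only [hA _ _ _ _, and_true, ← sum_smul, sum_ite_irrel, sum_const, card_univ,
    Fintype.card_fin]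
  split_ifs <;> simp [nsmul_eq_mul, mul_div_assoc]

lemma pairProd_eq_normalPair_add {p q t : ℤ} (h : p + q = t) :
    pairProd A p q
      = normalPair A t q + (if 0 ≤ p ∧ p = -q then (r * p / 2 : ℂ) else 0) • 1 := by
  obtain rfl : p = t - q := by omega
  unfold normalPair
  split_ifs with h₁ h₂ h₂
  · omega
  · simp
  · rw [pairProd_swap hA, if_pos h₂.2]
  · rw [pairProd_swap hA, if_neg (by omega)]

lemma lie_normalPair (X : Module.End ℂ V) (m l : ℤ) :
    ⁅X, normalPair A m l⁆ = ⁅X, pairProd A (m - l) l⁆ := by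
  rw [pairProd_eq_normalPair_add hA (sub_add_cancel m l), Ring.lie_add_smul_one]

lemma normalPair_lie (X : Module.End ℂ V) (n k : ℤ) :
    ⁅normalPair A n k, X⁆ = ⁅pairProd A (n - k) k, X⁆ := by
  rw [pairProd_eq_normalPair_add hA (sub_add_cancel n k), Ring.add_smul_one_lie]

lemma pairProd_lie_sum_pairProd {a b m : ℤ} {s : Finset ℤ} (h₁ : m + b ∈ s)
    (h₂ : -b ∈ s) (h₃ : m + a ∈ s) (h₄ : -a ∈ s) :
    ⁅pairProd A a b, ∑ l ∈ s, pairProd A (m - l) l⁆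
      = (b : ℂ) • pairProd A a (m + b) + (a : ℂ) • pairProd A (m + a) b := by
  have e₁ : ∀ x l : ℤ, x = -l ↔ l = -x := fun _ _ => by omega
  have e₂ : ∀ x l : ℤ, m - l = -x ↔ l = m + x := fun _ _ => by omega
  simp only [Ring.lie_sum, pairProd_lie_pairProd hA, e₁, e₂, sum_add_distrib, sum_ite_eq',
    if_pos h₁, if_pos h₂, if_pos h₃, if_pos h₄, sub_neg_eq_add]
  module

lemma sum_normalPair_lie_mode {n t : ℤ} {s : Finset ℤ} (h₁ : -t ∈ s) (h₂ : n + t ∈ s)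
    (j : Fin r) :
    ⁅∑ k ∈ s, normalPair A n k, A t j⁆ = (-t : ℂ) • A (n + t) j := by
  have e₁ : ∀ k : ℤ, t = -k ↔ k = -t := fun _ => by omega
  have e₂ : ∀ k : ℤ, n - k = -t ↔ k = n + t := fun _ => by omega
  rw [Ring.sum_lie]
  simp only [normalPair_lie hA, Ring.lie_swap _ (A t j), mode_lie_pairProd hA, e₁, e₂,
    sum_neg_distrib, sum_add_distrib, sum_ite_eq', if_pos h₁, if_pos h₂, sub_neg_eq_add]
  module

lemma chargeTerm_lie_chargeTerm (Q : Fin r → ℝ) (n m : ℤ) :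
    ⁅chargeTerm A Q n, chargeTerm A Q m⁆
      = (if n = -m then ((n : ℂ) ^ 3 - n) / 2 * ∑ j, (Q j : ℂ) ^ 2 else 0) • 1 := by
  have hsum : ⁅∑ i, (Q i : ℂ) • A n i, ∑ j, (Q j : ℂ) • A m j⁆
      = (if n = -m then (n / 2 : ℂ) * ∑ j, (Q j : ℂ) ^ 2 else 0) • 1 := by
    simp only [Ring.sum_lie, Ring.lie_sum, Ring.smul_lie, Ring.lie_smul, hA _ _ _ _, smul_smul,
      ite_and]
    split_ifs
    · simp only [smul_smul, ← sum_smul, mul_ite, mul_zero, sum_ite_eq', mem_univ, if_true,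
        mul_sum]
      congr 1
      exact sum_congr rfl fun j _ => by ring
    · simp
  rw [chargeTerm, chargeTerm, Ring.smul_lie, Ring.lie_smul, hsum, smul_smul, smul_smul]
  split_ifs with h
  · subst h
    congr 1
    push_cast
    linear_combination (m * (m ^ 2 - 1) / 2 * ∑ j, (Q j : ℂ) ^ 2) * Complex.I_sq
  · simp

lemma chargeTerm_lie_sum_normalPair (Q : Fin r → ℝ) {n m : ℤ} {s : Finset ℤ}
    (h₁ : -n ∈ s) (h₂ : m + n ∈ s) :
    ⁅chargeTerm A Q n, ∑ l ∈ s, normalPair A m l⁆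
      = (-Complex.I * ((n : ℂ) + 1) * n) • ∑ j, (Q j : ℂ) • A (m + n) j := by
  simp only [chargeTerm, Ring.smul_lie, Ring.sum_lie,
    Ring.lie_swap (A n _) (∑ l ∈ s, normalPair A m l), sum_normalPair_lie_mode hA h₁ h₂,
    smul_sum, smul_neg, smul_smul]
  refine sum_congr rfl fun j _ => ?_
  module

lemma normalPair_lie_sum_normalPair {n m k : ℤ} {s : Finset ℤ} (h₁ : m + k ∈ s)
    (h₂ : -k ∈ s) (h₃ : m + (n - k) ∈ s) (h₄ : -(n - k) ∈ s) :
    ⁅normalPair A n k, ∑ l ∈ s, normalPair A m l⁆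
      = (k : ℂ) • normalPair A (n + m) (m + k)
        + ((n - k : ℤ) : ℂ) • normalPair A (n + m) k
        + (if n = -m then (r * anomaly n k / 2 : ℂ) else 0) • 1 := by
  rw [normalPair_lie hA, Ring.lie_sum]
  simp only [lie_normalPair hA]
  rw [← Ring.lie_sum, pairProd_lie_sum_pairProd hA h₁ h₂ h₃ h₄,
    pairProd_eq_normalPair_add hA (t := n + m) (by ring),
    pairProd_eq_normalPair_add hA (t := n + m) (by ring), ← normalOrdering_constants_eq_anomaly]
  module

end Heisenberg

lemma mem_annihilatedFrom {N : ℤ} {w : V} :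
    w ∈ annihilatedFrom A N ↔ ∀ k, N ≤ k → ∀ j, A k j w = 0 := by
  simp [annihilatedFrom]

lemma annihilatedFrom_mono {N N' : ℤ} (h : N ≤ N') :
    annihilatedFrom A N ≤ annihilatedFrom A N' :=
  fun _ hw => mem_annihilatedFrom.mpr fun k hk => mem_annihilatedFrom.mp hw k (h.trans hk)

lemma normalPair_apply_eq_zero {N n k : ℤ} {w : V} (hw : w ∈ annihilatedFrom A N) (hN : |n| < N)
    (hk : k ∉ Set.Ioo (n - N) N) : normalPair A n k w = 0 := by
  obtain ⟨hN₁, hN₂⟩ := abs_lt.mp hN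
  rw [Set.mem_Ioo, not_and_or, not_lt, not_lt] at hk
  unfold normalPair
  split_ifs
  · simp [pairProd, mem_annihilatedFrom.mp hw k (by omega)]
  · simp [pairProd, mem_annihilatedFrom.mp hw (n - k) (by omega)]

lemma support_normalPair_apply_subset {N n : ℤ} {w : V} (hw : w ∈ annihilatedFrom A N)
    (hN : |n| < N) : Function.support (fun k => normalPair A n k w) ⊆ Set.Ioo (n - N) N :=
  fun _ hk => by_contra fun h => hk (normalPair_apply_eq_zero hw hN h)

lemma ssVirasoro_eq_truncatedVirasoro (Q : Fin r → ℝ) {N n M : ℤ} {w : V}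
    (hw : w ∈ annihilatedFrom A N) (hN : |n| < N) (hM : N + |n| ≤ M) :
    ssVirasoro Q A n w = truncatedVirasoro A Q (Icc (-M) M) n w := by
  have hs : Set.Ioo (n - N) N ⊆ Icc (-M) M := fun k hk => by
    have := neg_abs_le n; have := abs_nonneg n
    simp only [Set.mem_Ioo, coe_Icc, Set.mem_Icc] at hk ⊢
    omega
  rw [ssVirasoro, truncatedVirasoro, LinearMap.add_apply, LinearMap.sum_apply,
    ← finsum_eq_sum_of_support_subset _ ((support_normalPair_apply_subset hw hN).trans hs)]
  congr 1
  · simp [chargeTerm]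
  · congr 1
    ext k
    unfold normalPair
    split_ifs <;> simp [pairProd]

lemma sum_smul_normalPair_add_sum_smul_normalPair_apply {N n m K M : ℤ} {v : V}
    (hv : v ∈ annihilatedFrom A N) (hN : |n| + |m| < N) (hK : N + |n| + |m| ≤ K)
    (hM : K ≤ M) :
    ∑ k ∈ Icc (-K) K, (k : ℂ) • normalPair A (n + m) (m + k) v
      + ∑ k ∈ Icc (-K) K, ((n - k : ℤ) : ℂ) • normalPair A (n + m) k v
      = ((n : ℂ) - m) • ∑ p ∈ Icc (-M) M, normalPair A (n + m) p v := by
  have := abs_nonneg n; have := abs_nonneg m; have := le_abs_self n; have := le_abs_self m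
  have := neg_abs_le n; have := neg_abs_le m
  have hnm : |n + m| < N := abs_lt.mpr ⟨by omega, by omega⟩
  have h₁ : ∑ k ∈ Icc (-K) K, (k : ℂ) • normalPair A (n + m) (m + k) v
      = ∑ p ∈ Icc (-M) M, ((p - m : ℤ) : ℂ) • normalPair A (n + m) p v := by
    refine (sum_congr rfl fun k _ => by simp) |>.trans
      (Finset.sum_comp_add_left_of_support_subset (c := m) ?_ ?_)
    · refine Function.support_subset_iff'.mpr fun p hp => ?_
      rw [normalPair_apply_eq_zero hv hnm (fun h => hp ?_), smul_zero]
      simp only [Set.mem_Ioo, coe_Icc, Set.mem_Icc] at h ⊢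
      omega
    · refine Function.support_subset_iff'.mpr fun k hk => ?_
      rw [normalPair_apply_eq_zero hv hnm (fun h => hk ?_), smul_zero]
      simp only [Set.mem_Ioo, coe_Icc, Set.mem_Icc] at h ⊢
      omega
  have h₂ : ∑ k ∈ Icc (-K) K, ((n - k : ℤ) : ℂ) • normalPair A (n + m) k v
      = ∑ p ∈ Icc (-M) M, ((n - p : ℤ) : ℂ) • normalPair A (n + m) p v := by
    refine sum_subset (Icc_subset_Icc (by omega) hM) fun p _ hp => ?_
    rw [normalPair_apply_eq_zero hv hnm (fun h => hp ?_), smul_zero]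
    simp only [Set.mem_Ioo, mem_Icc] at h ⊢
    omega
  rw [h₁, h₂, ← sum_add_distrib, smul_sum]
  refine sum_congr rfl fun p _ => ?_
  rw [← add_smul]
  congr 1
  push_cast
  ring

section Heisenberg

variable (hA : IsHeisenberg A)
include hA

lemma mode_apply_mem {N : ℤ} {w : V} (hw : w ∈ annihilatedFrom A N) (q : ℤ) (i : Fin r) :
    A q i w ∈ annihilatedFrom A (max N (1 - q)) := by
  refine mem_annihilatedFrom.mpr fun k hk j => ?_
  simpa only [Ring.lie_def, LinearMap.sub_apply, Module.End.mul_apply,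
    if_neg (show ¬(k = -q ∧ j = i) by omega), zero_smul,
    mem_annihilatedFrom.mp hw k (le_of_max_le_left hk), map_zero, sub_zero, LinearMap.zero_apply]
    using congrArg (· w) (hA k q j i)

lemma pairProd_apply_mem {N : ℤ} {w : V} (hw : w ∈ annihilatedFrom A N) (p q : ℤ) :
    pairProd A p q w ∈ annihilatedFrom A (max (max N (1 - q)) (1 - p)) := by
  simp only [pairProd, LinearMap.sum_apply, Module.End.mul_apply]
  exact Submodule.sum_mem _ fun j _ => mode_apply_mem hA (mode_apply_mem hA hw q j) p j

lemma normalPair_apply_mem {N n : ℤ} {w : V} (hw : w ∈ annihilatedFrom A N) (hN : |n| < N)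
    (k : ℤ) : normalPair A n k w ∈ annihilatedFrom A (N + |n|) := by
  by_cases hk : k ∈ Set.Ioo (n - N) N
  · obtain ⟨hk₁, hk₂⟩ := hk
    have := le_abs_self n
    have := neg_abs_le n
    unfold normalPair
    split_ifs
    · exact annihilatedFrom_mono (by omega) (pairProd_apply_mem hA hw _ _)
    · exact annihilatedFrom_mono (by omega) (pairProd_apply_mem hA hw _ _)
  · rw [normalPair_apply_eq_zero hw hN hk]
    exact zero_mem _

lemma ssVirasoro_apply_mem (Q : Fin r → ℝ) {N n : ℤ} {w : V} (hw : w ∈ annihilatedFrom A N)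
    (hN : |n| < N) : ssVirasoro Q A n w ∈ annihilatedFrom A (N + |n|) := by
  rw [ssVirasoro_eq_truncatedVirasoro Q hw hN le_rfl,
    truncatedVirasoro, LinearMap.add_apply, LinearMap.sum_apply]
  refine add_mem ?_ (Submodule.sum_mem _ fun k _ => normalPair_apply_mem hA hw hN k)
  have := neg_le_abs n
  have := abs_nonneg n
  simp only [chargeTerm, LinearMap.smul_apply, LinearMap.sum_apply]
  exact Submodule.smul_mem _ _ (Submodule.sum_mem _ fun j _ => Submodule.smul_mem _ _
    (annihilatedFrom_mono (max_le (by omega) (by omega)) (mode_apply_mem hA hw n j)))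

lemma sum_normalPair_lie_sum_normalPair_apply {N n m M : ℤ} {v : V}
    (hv : v ∈ annihilatedFrom A N) (hN : |n| + |m| < N) (hM : N + 2 * (|n| + |m|) ≤ M) :
    ⁅∑ k ∈ Icc (-M) M, normalPair A n k, ∑ l ∈ Icc (-M) M, normalPair A m l⁆ v
      = ((n : ℂ) - m) • ∑ p ∈ Icc (-M) M, normalPair A (n + m) p v
        + (if n = -m then (r * ((n : ℂ) ^ 3 - n) / 12) else 0) • v := by
  have := abs_nonneg n; have := abs_nonneg m; have := le_abs_self n; have := le_abs_self m
  have := neg_abs_le n; have := neg_abs_le m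
  set S := ∑ l ∈ Icc (-M) M, normalPair A m l
  set K := N + |n| + |m|
  have hSv : S v ∈ annihilatedFrom A (N + |m|) := by
    rw [LinearMap.sum_apply]
    exact Submodule.sum_mem _ fun l _ => normalPair_apply_mem hA hv (by omega) l
  have hrestrict : ⁅∑ k ∈ Icc (-M) M, normalPair A n k, S⁆ v
      = ∑ k ∈ Icc (-K) K, ⁅normalPair A n k, S⁆ v := by
    rw [Ring.sum_lie, LinearMap.sum_apply]
    refine (sum_subset (Icc_subset_Icc (by omega) (by omega)) fun k _ hk => ?_).symm
    rw [mem_Icc] at hk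
    rw [Ring.lie_def, LinearMap.sub_apply, Module.End.mul_apply, Module.End.mul_apply,
      normalPair_apply_eq_zero hSv (by omega) (by simp only [Set.mem_Ioo]; omega),
      normalPair_apply_eq_zero hv (by omega) (by simp only [Set.mem_Ioo]; omega), map_zero,
      sub_zero]
  have hcollapse : ∀ k ∈ Icc (-K) K, ⁅normalPair A n k, S⁆ v
      = (k : ℂ) • normalPair A (n + m) (m + k) v
        + ((n - k : ℤ) : ℂ) • normalPair A (n + m) k v
        + (if n = -m then (r * anomaly n k / 2 : ℂ) else 0) • v := by
    intro k hk
    rw [mem_Icc] at hk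
    rw [normalPair_lie_sum_normalPair hA (by rw [mem_Icc]; omega) (by rw [mem_Icc]; omega)
      (by rw [mem_Icc]; omega) (by rw [mem_Icc]; omega)]
    simp only [LinearMap.add_apply, LinearMap.smul_apply, Module.End.one_apply]
  have hanomaly : ∑ k ∈ Icc (-K) K, (if n = -m then (r * anomaly n k / 2 : ℂ) else 0)
      = if n = -m then (r * ((n : ℂ) ^ 3 - n) / 12) else 0 := by
    split_ifs
    · have h6 : (6 : ℂ) * ∑ k ∈ Icc (-K) K, (anomaly n k : ℂ) = n ^ 3 - n := by
        exact_mod_cast six_mul_sum_anomaly (K := K) (by omega)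
      rw [← sum_div, ← mul_sum]
      linear_combination (r / 12 : ℂ) * h6
    · simp
  rw [hrestrict, sum_congr rfl hcollapse, sum_add_distrib, sum_add_distrib, ← sum_smul, hanomaly,
    sum_smul_normalPair_add_sum_smul_normalPair_apply hv hN (K := K) (M := M) le_rfl (by omega)]

lemma truncatedVirasoro_lie_apply (Q : Fin r → ℝ) {N n m M : ℤ} {v : V}
    (hv : v ∈ annihilatedFrom A N) (hN : |n| + |m| < N) (hM : N + 2 * (|n| + |m|) ≤ M) :
    ⁅truncatedVirasoro A Q (Icc (-M) M) n, truncatedVirasoro A Q (Icc (-M) M) m⁆ v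
      = ((n : ℂ) - m) • truncatedVirasoro A Q (Icc (-M) M) (n + m) v
        + (if n = -m then (r + 6 * ∑ j, (Q j : ℂ) ^ 2) / 12 * ((n : ℂ) ^ 3 - n) else 0)
          • v := by
  have := neg_abs_le n; have := neg_abs_le m; have := le_abs_self n; have := le_abs_self m
  have hmem : ∀ k, |k| ≤ |n| + |m| → k ∈ Icc (-M) M := fun k hk => by
    have := neg_abs_le k; have := le_abs_self k
    rw [mem_Icc]; constructor <;> omega
  have hexpand : ∀ a b c d : Module.End ℂ V,
      ⁅a + b, c + d⁆ = ⁅a, c⁆ + ⁅a, d⁆ - ⁅c, b⁆ + ⁅b, d⁆ := by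
    intros; simp only [Ring.lie_def]; noncomm_ring
  rw [truncatedVirasoro, truncatedVirasoro, truncatedVirasoro, hexpand,
    chargeTerm_lie_chargeTerm hA, chargeTerm_lie_sum_normalPair hA Q (hmem _ (by simp))
      (hmem _ ((abs_add_le m n).trans (by omega))),
    chargeTerm_lie_sum_normalPair hA Q (hmem _ (by simp))
      (hmem _ ((abs_add_le n m).trans le_rfl))]
  simp only [LinearMap.add_apply, LinearMap.sub_apply, LinearMap.smul_apply, Module.End.one_apply,
    sum_normalPair_lie_sum_normalPair_apply hA hv hN hM, chargeTerm, LinearMap.sum_apply,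
    add_comm m n]
  split_ifs <;> module

lemma ssVirasoro_apply_sub_ssVirasoro_apply (Q : Fin r → ℝ) {N n m : ℤ} {v : V}
    (hv : v ∈ annihilatedFrom A N) (hN : |n| + |m| < N) :
    ssVirasoro Q A n (ssVirasoro Q A m v) - ssVirasoro Q A m (ssVirasoro Q A n v)
      = ((n : ℂ) - m) • ssVirasoro Q A (n + m) v
        + (if n = -m then (r + 6 * ∑ j, (Q j : ℂ) ^ 2) / 12 * ((n : ℂ) ^ 3 - n) else 0)
          • v := by
  have := abs_nonneg n; have := abs_nonneg m; have := abs_add_le n m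
  have hL := fun k {N'} {w : V} (hw : w ∈ annihilatedFrom A N') (hk : |k| < N')
      (hM : N' + |k| ≤ 3 * N) => ssVirasoro_eq_truncatedVirasoro Q hw hk hM
  have hLm := ssVirasoro_apply_mem hA Q hv (n := m) (by omega)
  have hLn := ssVirasoro_apply_mem hA Q hv (n := n) (by omega)
  rw [hL n hLm (by omega) (by omega), hL m hLn (by omega) (by omega), hL m hv (by omega) (by omega),
    hL n hv (by omega) (by omega), hL (n + m) hv (by omega) (by omega), ← Module.End.mul_apply,
    ← Module.End.mul_apply, ← LinearMap.sub_apply, ← Ring.lie_def,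
    truncatedVirasoro_lie_apply hA Q hv hN (by omega)]

end Heisenberg

end SegalSugawara

open SegalSugawara

theorem segal_sugawara_virasoro_relations_general
    {V : Type*} [NormedAddCommGroup V] [InnerProductSpace ℂ V] {r : ℕ}
    (Q : Fin r → ℝ) (A : ℤ → Fin r → V →ₗ[ℂ] V)
    (hcomm : ∀ (n m : ℤ) (i j : Fin r) (v : V),
      A n i (A m j v) - A m j (A n i v)
        = if n = -m ∧ i = j then ((n : ℂ) / 2) • v else 0)
    (hann : ∀ v : V, ∃ N : ℤ, ∀ n ≥ N, ∀ j, A n j v = 0)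
    (n m : ℤ) (v : V) :
    ssVirasoro Q A n (ssVirasoro Q A m v) - ssVirasoro Q A m (ssVirasoro Q A n v)
      = ((n : ℂ) - (m : ℂ)) • ssVirasoro Q A (n + m) v
        + (if n = -m then
            ((((r : ℂ) + 6 * ((∑ j, (Q j) ^ 2 : ℝ) : ℂ)) / 12) * ((n : ℂ) ^ 3 - n))
          else 0) • v := by
  obtain ⟨N, hN⟩ := hann v
  have hv : v ∈ annihilatedFrom A (max N (|n| + |m| + 1)) :=
    annihilatedFrom_mono (le_max_left _ _) (mem_annihilatedFrom.mpr hN)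
  exact_mod_cast ssVirasoro_apply_sub_ssVirasoro_apply (isHeisenberg_of_apply hcomm) Q hv
    (by omega)

/-- Segal–Sugawara construction: if the `A_n` satisfy the Heisenberg commutation
relations `[⟨u,A_n⟩, ⟨v,A_m⟩] = ⟨u,v⟩(n/2)δ_{n,-m}`, are adjoint to each other in the
sense `A_n* = A_{-n}` for `n ≠ 0` and `A_0* = A_0 - iQ` (componentwise), and each vector
is annihilated by all `A_n` with `n` large (Fock space property), then the modes
`L_n = -iQ(n+1)·A_n + Σ_m :⟨A_{n-m},A_m⟩:` satisfy the Virasoro relations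
`[L_n, L_m] = (n-m)L_{n+m} + (c/12)(n³-n)δ_{n,-m}` with central charge
`c = r + 6⟨Q,Q⟩`. -/
theorem segal_sugawara_virasoro_relations
    {V : Type*} [NormedAddCommGroup V] [InnerProductSpace ℂ V] {r : ℕ}
    (Q : Fin r → ℝ) (A : ℤ → Fin r → V →ₗ[ℂ] V)
    (hcomm : ∀ (n m : ℤ) (i j : Fin r) (v : V),
      A n i (A m j v) - A m j (A n i v)
        = if n = -m ∧ i = j then ((n : ℂ) / 2) • v else 0)
    (hadj : ∀ (n : ℤ), n ≠ 0 → ∀ (j : Fin r) (v w : V),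
      (inner ℂ (A n j v) w : ℂ) = inner ℂ v (A (-n) j w))
    (hadj0 : ∀ (j : Fin r) (v w : V),
      (inner ℂ (A 0 j v) w : ℂ)
        = inner ℂ v (A 0 j w) - Complex.I * (Q j : ℂ) * inner ℂ v w)
    (hann : ∀ v : V, ∃ N : ℤ, ∀ n ≥ N, ∀ j, A n j v = 0)
    (n m : ℤ) (v : V) :
    ssVirasoro Q A n (ssVirasoro Q A m v) - ssVirasoro Q A m (ssVirasoro Q A n v)
      = ((n : ℂ) - (m : ℂ)) • ssVirasoro Q A (n + m) v
        + (if n = -m then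
            ((((r : ℂ) + 6 * ((∑ j, (Q j) ^ 2 : ℝ) : ℂ)) / 12) * ((n : ℂ) ^ 3 - n))
          else 0) • v :=
  segal_sugawara_virasoro_relations_general Q A hcomm hann n m v
end
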